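/- Let A_1, …, A_k be pairwise commuting N×N matrices with nonnegative integer entries forming an irreducible family, with every row sum of every A_i at least 2 and with A = A_1⋯A_k irreducible; let x be the unimodular Perron–Frobenius eigenvector and let M be the Borel probability measure on X_B determined by the cylinder formula. For each vertex v ∈ {1,…,N}, fix an enumeration μ^v_0, …, μ^v_{m_v−1} of the finite paths of length k in B with range v. Then for every n ∈ ℕ, the family of vectors { ρ^{n/2}·( M([μ^{s(λ)}_0])^{−1} χ_{[λμ^{s(λ)}_0]} − M([μ^{s(λ)}_i])^{−1} χ_{[λμ^{s(λ)}_i]} ) : λ ∈ F^{nk}B, 1 ≤ i ≤ m_{s(λ)} − 1 }, where ρ = ρ_1⋯ρ_k, is a vector-space basis of 𝒲_n (it is linearly independent and spans 𝒲_n). -/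

import Mathlib

open scoped Classical ENNReal Topology
open TopologicalSpace MeasureTheory Filter Set
open Fin.NatCast

namespace KBratteli

variable (k N : ℕ) [NeZero k] (A : Fin k → Matrix (Fin N) (Fin N) ℕ)

/-- An edge at level `n` of the stationary `k`-Bratteli diagram of the matrices
`A 0, …, A (k-1)`: an element of `Edge k N A n` is an edge whose source lies in the
level-`(n+1)` vertex set and whose range lies in the level-`n` vertex set (both copies of
`Fin N`); there are exactly `A (n % k) p q` edges with range `p` and source `q`. -/
structure Edge (n : ℕ) : Type where
  rg : Fin N
  src : Fin N
  idx : Fin (A (n : Fin k) rg src)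

/-- The infinite path space `X_B` of the stationary `k`-Bratteli diagram of `A`. -/
def PathSpace : Type :=
  { x : (n : ℕ) → Edge k N A n // ∀ n, (x n).src = (x (n + 1)).rg }

/-- A finite path of length `ℓ` beginning at level `0`: a composable string of edges,
together with the vertices it visits.  Length-`0` paths are vertices of `V₀`. -/
structure FinPath (ℓ : ℕ) : Type where
  vtx : Fin (ℓ + 1) → Fin N
  edge : (i : Fin ℓ) → Edge k N A i
  rg_eq : ∀ i : Fin ℓ, (edge i).rg = vtx i.castSucc
  src_eq : ∀ i : Fin ℓ, (edge i).src = vtx i.succ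

/-- `FB`: the set of all finite paths (of all lengths) beginning at level `0`. -/
abbrev FB : Type := Σ ℓ : ℕ, FinPath k N A ℓ

variable {k N A}

/-- The source (final) vertex of a finite path. -/
def FinPath.src {ℓ : ℕ} (lam : FinPath k N A ℓ) : Fin N := lam.vtx (Fin.last ℓ)

/-- The range (initial, level-0) vertex of a finite path. -/
def FinPath.rg {ℓ : ℕ} (lam : FinPath k N A ℓ) : Fin N := lam.vtx 0

/-- The length-0 finite path at the level-0 vertex `v`. -/
def vertexPath (v : Fin N) : FinPath k N A 0 where
  vtx := fun _ => v
  edge := fun i => i.elim0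
  rg_eq := fun i => i.elim0
  src_eq := fun i => i.elim0

/-- The cylinder set `[λ]` of a finite path `λ`: all infinite paths with initial
segment `λ`. -/
def Cyl {ℓ : ℕ} (lam : FinPath k N A ℓ) : Set (PathSpace k N A) :=
  { x | (x.1 0).rg = lam.rg ∧ ∀ i : Fin ℓ, x.1 i = lam.edge i }

variable (k N A) in
/-- The collection of all cylinder sets. -/
def cylinderSets : Set (Set (PathSpace k N A)) :=
  { S | ∃ (ℓ : ℕ) (lam : FinPath k N A ℓ), S = Cyl lam }

/-- The cylinder-set topology on the infinite path space. -/
instance : TopologicalSpace (PathSpace k N A) :=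
  generateFrom (cylinderSets k N A)

/-- The Borel σ-algebra of the cylinder-set topology. -/
instance : MeasurableSpace (PathSpace k N A) := borel _

instance : BorelSpace (PathSpace k N A) := ⟨rfl⟩

lemma isOpen_cyl {ℓ : ℕ} (lam : FinPath k N A ℓ) : IsOpen (Cyl lam) :=
  isOpen_generateFrom_of_mem ⟨ℓ, lam, rfl⟩

lemma measurableSet_cyl {ℓ : ℕ} (lam : FinPath k N A ℓ) : MeasurableSet (Cyl lam) :=
  (isOpen_cyl lam).measurableSet

/-- Edges form a finite type. -/
def edgeEquiv (n : ℕ) : Edge k N A n ≃ Σ p : Fin N, Σ q : Fin N, Fin (A (n : Fin k) p q) where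
  toFun e := ⟨e.rg, e.src, e.idx⟩
  invFun t := ⟨t.1, t.2.1, t.2.2⟩
  left_inv e := rfl
  right_inv t := rfl

instance (n : ℕ) : Finite (Edge k N A n) := by
  have : ∀ p q : Fin N, Finite (Fin (A (n : Fin k) p q)) := fun _ _ => inferInstance
  have : Finite (Σ p : Fin N, Σ q : Fin N, Fin (A (n : Fin k) p q)) := inferInstance
  exact Finite.of_equiv _ (edgeEquiv n).symm

instance (ℓ : ℕ) : Finite (FinPath k N A ℓ) := by
  have hinj : Function.Injective
      (fun lam : FinPath k N A ℓ => (lam.vtx, lam.edge)) := by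
    rintro ⟨v, e, h1, h2⟩ ⟨v', e', h1', h2'⟩ h
    simp only [Prod.mk.injEq] at h
    obtain ⟨hv, he⟩ := h
    subst hv; subst he; rfl
  exact Finite.of_injective _ hinj

instance : Countable (FB k N A) := by infer_instance

/-- The initial segment of length `m` of an infinite path. -/
def prefixPath (x : PathSpace k N A) (m : ℕ) : FinPath k N A m where
  vtx := fun i => (x.1 i).rg
  edge := fun i => x.1 i
  rg_eq := fun _ => rfl
  src_eq := fun i => x.2 i

lemma mem_cyl_prefixPath (x : PathSpace k N A) (m : ℕ) : x ∈ Cyl (prefixPath x m) :=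
  ⟨rfl, fun _ => rfl⟩

lemma measurableSet_coord (j : ℕ) (P : Edge k N A j → Prop) :
    MeasurableSet { x : PathSpace k N A | P (x.1 j) } := by
  have h : { x : PathSpace k N A | P (x.1 j) }
      = ⋃ (lam : FinPath k N A (j + 1)) (_ : P (lam.edge (Fin.last j))), Cyl lam := by
    ext x
    simp only [Set.mem_setOf_eq, Set.mem_iUnion]
    constructor
    · intro hx
      exact ⟨prefixPath x (j + 1), hx, mem_cyl_prefixPath x (j + 1)⟩
    · rintro ⟨lam, hP, -, hedge⟩
      have hx : x.1 j = lam.edge (Fin.last j) := hedge (Fin.last j)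
      rw [hx]; exact hP
  rw [h]
  exact MeasurableSet.iUnion fun lam => MeasurableSet.iUnion fun _ => measurableSet_cyl lam

/-- The first level at which two infinite paths differ. -/
noncomputable def firstDiff (x y : PathSpace k N A) : ℕ := sInf { n | x.1 n ≠ y.1 n }

/-- The function `d_w` associated to a weight-type function `w` on finite paths:
`d_w(x,x) = 0`; `d_w(x,y) = 1` if `x` and `y` have no common initial sub-path (i.e. they
do not even start at the same level-0 vertex); and otherwise `d_w(x,y) = w(x ∧ y)`, the
value of `w` on the longest common initial sub-path of `x` and `y`. -/
noncomputable def distW (w : FB k N A → ℝ) (x y : PathSpace k N A) : ℝ :=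
  if x = y then 0
  else if (x.1 0).rg = (y.1 0).rg then w ⟨firstDiff x y, prefixPath x (firstDiff x y)⟩
  else 1

/-- `η` is an (initial) sub-path of `λ`. -/
def IsSubPath {m ℓ : ℕ} (η : FinPath k N A m) (lam : FinPath k N A ℓ) : Prop :=
  ∃ h : m ≤ ℓ, η.rg = lam.rg ∧ ∀ i : Fin m, η.edge i = lam.edge (Fin.castLE h i)

/-- `lam ∈ F_γ B` : the finite path `lam` extends `γ`. -/
def Extends {m : ℕ} (γ : FinPath k N A m) (lam : FB k N A) : Prop :=
  IsSubPath γ lam.2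

/-- The spectral radius of a matrix of nonnegative integers, as a real number. -/
noncomputable def specRad {N : ℕ} (M : Matrix (Fin N) (Fin N) ℕ) : ℝ :=
  (spectralRadius ℂ (M.map (Nat.cast : ℕ → ℂ))).toReal

/-- The weight `w_δ` on the stationary `k`-Bratteli diagram of `A`, relative to data
`ρ : Fin k → ℝ` (the spectral radii) and `xv : Fin N → ℝ` (the Perron–Frobenius
eigenvector): on a path `η` of length `q·k + t` (`0 ≤ t ≤ k-1`) it is
`(ρ₁^{q+1} ⋯ ρ_t^{q+1} · ρ_{t+1}^q ⋯ ρ_k^q)^{-1/δ} · xv (s η)`. -/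
noncomputable def wt (δ : ℝ) (ρ : Fin k → ℝ) (xv : Fin N → ℝ) (lam : FB k N A) : ℝ :=
  (∏ i : Fin k, ρ i ^ (if (i : ℕ) < lam.1 % k then lam.1 / k + 1 else lam.1 / k))
      ^ (-(1 / δ)) * xv lam.2.src

/-- The value `M([λ]) = (ρ₁⋯ρ_t)^{-(q+1)} (ρ_{t+1}⋯ρ_k)^{-q} · x_{s(λ)}` of the
measure `M` on the cylinder set of a path of length `q·k + t`. -/
noncomputable def Mval (ρ : Fin k → ℝ) (xv : Fin N → ℝ) (lam : FB k N A) : ℝ :=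
  (∏ i : Fin k, ρ i ^ (if (i : ℕ) < lam.1 % k then lam.1 / k + 1 else lam.1 / k))⁻¹
    * xv lam.2.src

/-- A family of matrices is irreducible if for every pair of indices some finite product
of matrices from the family has positive corresponding entry. -/
def IrreducibleFamily {k N : ℕ} (A : Fin k → Matrix (Fin N) (Fin N) ℕ) : Prop :=
  ∀ a b : Fin N, ∃ l : List (Fin k), 0 < (l.map A).prod a b

/-- A single square matrix with nonnegative integer entries is irreducible if for every
pair of indices some positive power has positive corresponding entry. -/
def MatIrreducible {N : ℕ} (B : Matrix (Fin N) (Fin N) ℕ) : Prop :=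
  ∀ a b : Fin N, ∃ m : ℕ, 0 < m ∧ 0 < (B ^ m) a b

/-- The diameter (in `ℝ≥0∞`) of a set of infinite paths relative to `d_w`. -/
noncomputable def diamW (w : FB k N A → ℝ) (U : Set (PathSpace k N A)) : ℝ≥0∞ :=
  ⨆ (x) (_ : x ∈ U) (y) (_ : y ∈ U), ENNReal.ofReal (distW w x y)

/-- The `t`-dimensional Hausdorff (outer) measure of a set `Z` relative to the metric
`d_w`: `H^t(Z) = lim_{ε → 0} inf { Σᵢ (diam Uᵢ)^t : Z ⊆ ⋃ᵢ Uᵢ, diam Uᵢ < ε }`. -/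
noncomputable def hausW (w : FB k N A → ℝ) (t : ℝ) (Z : Set (PathSpace k N A)) : ℝ≥0∞ :=
  ⨆ (ε : ℝ≥0∞) (_ : 0 < ε),
    ⨅ (U : ℕ → Set (PathSpace k N A)) (_ : Z ⊆ ⋃ n, U n)
      (_ : ∀ n, diamW w (U n) < ε), ∑' n, diamW w (U n) ^ t

lemma natCast_mul_add (n i : ℕ) : ((n * k + i : ℕ) : Fin k) = (i : Fin k) := by
  push_cast
  simp [Fin.natCast_self]

/-- Transport of edges between levels governed by the same matrix (the diagram is
stationary with period `k`). -/
def Edge.cast {i j : ℕ} (h : (i : Fin k) = (j : Fin k)) (e : Edge k N A i) :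
    Edge k N A j where
  rg := e.rg
  src := e.src
  idx := Fin.cast (by rw [h]) e.idx

/-- The cylinder set `[γ e]` of a finite path `γ` (of length `m`) extended by one
further edge `e` at level `m`. -/
def cylExt {m : ℕ} (γ : FinPath k N A m) (e : Edge k N A m) : Set (PathSpace k N A) :=
  Cyl γ ∩ { x | x.1 m = e }

lemma measurableSet_cylExt {m : ℕ} (γ : FinPath k N A m) (e : Edge k N A m) :
    MeasurableSet (cylExt γ e) :=
  (measurableSet_cyl γ).inter (measurableSet_coord m fun f => f = e)

/-- The cylinder set `[λ μ]` of the concatenation of `λ ∈ F^{nk}B` with `μ ∈ F^{k}B`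
(the diagram being stationary of period `k`, `μ` concatenates onto `λ`). -/
def cylCat {n : ℕ} (lam : FinPath k N A (n * k)) (η : FinPath k N A k) :
    Set (PathSpace k N A) :=
  Cyl lam ∩ { x | (x.1 (n * k)).rg = η.rg } ∩
    ⋂ i : Fin k,
      { x | x.1 (n * k + (i : ℕ)) = Edge.cast (natCast_mul_add n (i : ℕ)).symm (η.edge i) }

lemma measurableSet_cylCat {n : ℕ} (lam : FinPath k N A (n * k)) (η : FinPath k N A k) :
    MeasurableSet (cylCat lam η) :=
  ((measurableSet_cyl lam).inter
      (measurableSet_coord (n * k) (fun e => e.rg = η.rg))).inter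
    (MeasurableSet.iInter fun i => measurableSet_coord (n * k + (i : ℕ))
      (fun e => e = Edge.cast (natCast_mul_add n (i : ℕ)).symm (η.edge i)))



end KBratteli

namespace KBratteli

variable {k N : ℕ} [NeZero k] {A : Fin k → Matrix (Fin N) (Fin N) ℕ}

section L2

variable (M : MeasureTheory.Measure (PathSpace k N A)) [MeasureTheory.IsFiniteMeasure M]

/-- The indicator function `χ_{[λ]}` of a cylinder set, as an element of `L²(X_B, M)`. -/
noncomputable def chi {ℓ : ℕ} (lam : FinPath k N A ℓ) : Lp ℂ 2 M :=
  indicatorConstLp 2 (measurableSet_cyl lam) (measure_ne_top M _) (1 : ℂ)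

/-- The indicator function `χ_{[γ e]}` of the cylinder of a path `γ` extended by one
further edge `e`, as an element of `L²(X_B, M)`. -/
noncomputable def chiE {m : ℕ} (γ : FinPath k N A m) (e : Edge k N A m) : Lp ℂ 2 M :=
  indicatorConstLp 2 (measurableSet_cylExt γ e) (measure_ne_top M _) (1 : ℂ)

/-- The indicator function `χ_{[λ μ]}` of the cylinder of the concatenation of
`λ ∈ F^{nk}B` and `μ ∈ F^{k}B`, as an element of `L²(X_B, M)`. -/
noncomputable def chiC {n : ℕ} (lam : FinPath k N A (n * k)) (η : FinPath k N A k) :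
    Lp ℂ 2 M :=
  indicatorConstLp 2 (measurableSet_cylCat lam η) (measure_ne_top M _) (1 : ℂ)

/-- The constant function `1` in `L²(X_B, M)`. -/
noncomputable def oneL2 : Lp ℂ 2 M :=
  indicatorConstLp 2 MeasurableSet.univ (measure_ne_top M _) (1 : ℂ)

/-- `Ṽ_m`, the linear span in `L²(X_B, M)` of the indicators of cylinders of paths of
length `m`. -/
noncomputable def Vt (m : ℕ) : Submodule ℂ (Lp ℂ 2 M) :=
  Submodule.span ℂ (Set.range fun lam : FinPath k N A m => chi M lam)

/-- `𝒲_n = 𝒱_{n+1} ⊓ 𝒱_n^⊥` where `𝒱_n = Ṽ_{nk}`. -/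
noncomputable def Wn (n : ℕ) : Submodule ℂ (Lp ℂ 2 M) :=
  Vt M ((n + 1) * k) ⊓ (Vt M (n * k))ᗮ

/-- `E_{-1}`: the subspace of constant functions. -/
noncomputable def Eneg : Submodule ℂ (Lp ℂ 2 M) :=
  Submodule.span ℂ {oneL2 M}

/-- `E_0 = span{ M([v])⁻¹ χ_{[v]} − M([v'])⁻¹ χ_{[v']} : v ≠ v' ∈ V₀ }`. -/
noncomputable def Ezero : Submodule ℂ (Lp ℂ 2 M) :=
  Submodule.span ℂ
    { f | ∃ v v' : Fin N, v ≠ v' ∧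
        f = (((M (Cyl (vertexPath v))).toReal : ℂ))⁻¹ • chi M (vertexPath v)
            - (((M (Cyl (vertexPath v'))).toReal : ℂ))⁻¹ • chi M (vertexPath v') }

/-- `E_γ = span{ M([γe])⁻¹ χ_{[γe]} − M([γe'])⁻¹ χ_{[γe']} }` over distinct edges
`e ≠ e'` with range `s(γ)`. -/
noncomputable def Esub {m : ℕ} (γ : FinPath k N A m) : Submodule ℂ (Lp ℂ 2 M) :=
  Submodule.span ℂ
    { f | ∃ e e' : Edge k N A m, e ≠ e' ∧ e.rg = γ.src ∧ e'.rg = γ.src ∧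
        f = (((M (cylExt γ e)).toReal : ℂ))⁻¹ • chiE M γ e
            - (((M (cylExt γ e')).toReal : ℂ))⁻¹ • chiE M γ e' }

noncomputable instance (m : ℕ) : FiniteDimensional ℂ (Vt M m) :=
  FiniteDimensional.span_of_finite ℂ (Set.finite_range _)

noncomputable instance : FiniteDimensional ℂ (Eneg M) :=
  FiniteDimensional.span_of_finite ℂ (Set.finite_singleton _)

/-- `Ξ_q`: the orthogonal projection of `L²(X_B, M)` onto `R_q = Ṽ_{qk}`. -/
noncomputable def Xi (q : ℕ) : Lp ℂ 2 M →L[ℂ] Lp ℂ 2 M :=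
  (Vt M (q * k)).subtypeL.comp (Submodule.orthogonalProjectionOnto (Vt M (q * k)))

/-- `Ξ_{-1}`: the orthogonal projection onto the constants `R_{-1}`. -/
noncomputable def XiNeg : Lp ℂ 2 M →L[ℂ] Lp ℂ 2 M :=
  (Eneg M).subtypeL.comp (Submodule.orthogonalProjectionOnto (Eneg M))

/-- `P_q = Ξ_q − Ξ_{q-1}` (with `Ξ_{-1}` the projection onto the constants). -/
noncomputable def Pq : ℕ → (Lp ℂ 2 M →L[ℂ] Lp ℂ 2 M)
  | 0 => Xi M 0 - XiNeg M
  | (q + 1) => Xi M (q + 1) - Xi M q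


/-- `R_{q-1}` for `q ∈ ℕ`, with the convention `R_{-1} = ` constants. -/
noncomputable def Rprev : ℕ → Submodule ℂ (Lp ℂ 2 M)
  | 0 => Eneg M
  | (q + 1) => Vt M (q * k)

/-- The domain of the Dirac operator `D`. -/
noncomputable def domD (α : ℕ → ℝ) : Set (Lp ℂ 2 M) :=
  { f | Summable fun q : ℕ => α q ^ 2 * ‖Pq M q f‖ ^ 2 }

/-- The Dirac operator `D f = Σ_q α_q P_q f`. -/
noncomputable def opD (α : ℕ → ℝ) (f : Lp ℂ 2 M) : Lp ℂ 2 M :=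
  ∑' q : ℕ, ((α q : ℂ)) • Pq M q f

end L2

end KBratteli

/-!
Split each `λ ∈ F^{nk}B` by the next `k` edges: `χ_{[λ]} = ∑_j χ_{[λμ_j]}`, where the
`χ_{[λμ_j]}` are pairwise orthogonal and span `𝒱_{n+1}`. Since `M([λμ]) = ρ^{-n} M([μ])`, within
the block of `λ` the squared norms `‖χ_{[λμ_j]}‖²` are proportional to the weights `M([μ_j])`.
Hence every difference `M([μ_0])⁻¹ χ_{[λμ_0]} - M([μ_j])⁻¹ χ_{[λμ_j]}` is orthogonal to
`χ_{[λ]}` (and to the other blocks), pairing with `χ_{[λμ_j]}` shows the differences are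
independent, and together with the `χ_{[λ]}` they span `𝒱_{n+1}`; so they span
`𝒱_{n+1} ⊓ 𝒱_nᗮ = 𝒲_n`. The factor `ρ^{n/2}` is a nonzero scalar.
-/

open scoped InnerProductSpace

namespace Submodule

variable {𝕜 E : Type*} [RCLike 𝕜] [NormedAddCommGroup E] [InnerProductSpace 𝕜 E]

theorem inf_orthogonal_le_of_le_sup {U V D : Submodule 𝕜 E} (hU : U ≤ V ⊔ D) (hD : D ≤ Vᗮ) :
    U ⊓ Vᗮ ≤ D := by
  rintro f ⟨hfU, hfV⟩
  obtain ⟨v, hv, d, hd, rfl⟩ := mem_sup.1 (hU hfU)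
  have hv' : v ∈ Vᗮ := by simpa using Vᗮ.sub_mem hfV (hD hd)
  rw [(inf_orthogonal_eq_bot V).le ⟨hv, hv'⟩, zero_add]
  exact hd

end Submodule

namespace InnerProductSpace

variable {𝕜 E : Type*} [RCLike 𝕜] [NormedAddCommGroup E] [InnerProductSpace 𝕜 E]
  {β : Type*} {ι : β → Type*}
  (e : (b : β) → ι b → E) (w : (b : β) → ι b → ℝ) (i₀ : (b : β) → ι b)

noncomputable def blockDiff (b : β) (i : ι b) : E :=
  ((w b (i₀ b) : 𝕜))⁻¹ • e b (i₀ b) - ((w b i : 𝕜))⁻¹ • e b i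

variable {e w i₀} {κ : β → ℝ}
  (horth : ∀ b b', b ≠ b' → ∀ i i', ⟪e b i, e b' i'⟫_𝕜 = 0)
  (horth' : ∀ b i i', i ≠ i' → ⟪e b i, e b i'⟫_𝕜 = 0)
  (hnorm : ∀ b i, ⟪e b i, e b i⟫_𝕜 = ((κ b * w b i : ℝ) : 𝕜))
  (hw : ∀ b i, 0 < w b i)

include horth in
theorem inner_blockDiff_of_ne {b b' : β} (h : b ≠ b') (i : ι b) (j : ι b') :
    ⟪e b i, blockDiff (𝕜 := 𝕜) e w i₀ b' j⟫_𝕜 = 0 := by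
  simp [blockDiff, inner_sub_right, inner_smul_right, horth b b' h]

include horth' hnorm hw in
theorem inner_blockDiff (b : β) (i j : ι b) :
    ⟪e b i, blockDiff (𝕜 := 𝕜) e w i₀ b j⟫_𝕜 =
      (if i = i₀ b then (κ b : 𝕜) else 0) - (if i = j then (κ b : 𝕜) else 0) := by
  have key : ∀ j, ((w b j : 𝕜))⁻¹ * ⟪e b i, e b j⟫_𝕜 = if i = j then (κ b : 𝕜) else 0 := by
    intro j
    split_ifs with hij
    · subst hij
      have : (w b i : 𝕜) ≠ 0 := RCLike.ofReal_ne_zero.2 (hw b i).ne'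
      rw [hnorm]; push_cast; field_simp
    · rw [horth' b i j hij, mul_zero]
  rw [blockDiff, inner_sub_right, inner_smul_right, inner_smul_right, key, key]

include horth horth' hnorm hw in
theorem linearIndependent_blockDiff (hκ : ∀ b, κ b ≠ 0) :
    LinearIndependent 𝕜 fun p : Σ b, {i : ι b // i ≠ i₀ b} =>
      blockDiff (𝕜 := 𝕜) e w i₀ p.1 p.2 := by
  rw [linearIndependent_iff']
  intro s a hs p hp
  have hinner : ∀ q ∈ s, q ≠ p →
      a q * ⟪e p.1 p.2, blockDiff (𝕜 := 𝕜) e w i₀ q.1 q.2⟫_𝕜 = 0 := by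
    rintro ⟨b, j, hj⟩ - hq
    obtain ⟨b', j', hj'⟩ := p
    obtain rfl | hb := eq_or_ne b' b
    · have : j' ≠ j := fun h => hq (by subst h; rfl)
      simp [inner_blockDiff horth' hnorm hw, hj', this]
    · rw [inner_blockDiff_of_ne horth hb, mul_zero]
  have := congrArg (fun v => ⟪e p.1 p.2, v⟫_𝕜) hs
  simp only [inner_sum, inner_smul_right, inner_zero_right] at this
  rw [Finset.sum_eq_single p hinner (fun h => absurd hp h), inner_blockDiff horth' hnorm hw,
    if_neg p.2.2, if_pos rfl] at this
  simpa [hκ] using this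

include hw in
theorem smul_blockDiff_add (b : β) (i : ι b) :
    (w b i : 𝕜) • blockDiff (𝕜 := 𝕜) e w i₀ b i + e b i =
      (w b i : 𝕜) • ((w b (i₀ b) : 𝕜)⁻¹ • e b (i₀ b)) := by
  have : (w b i : 𝕜) ≠ 0 := RCLike.ofReal_ne_zero.2 (hw b i).ne'
  rw [blockDiff, smul_sub, smul_inv_smul₀ this, sub_add_cancel]

variable [∀ b, Fintype (ι b)]

include horth horth' hnorm hw in
theorem inner_sum_blockDiff (b b' : β) (j : ι b') :
    ⟪∑ i, e b i, blockDiff (𝕜 := 𝕜) e w i₀ b' j⟫_𝕜 = 0 := by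
  rw [sum_inner]
  obtain rfl | h := eq_or_ne b b'
  · simp [inner_blockDiff horth' hnorm hw, Finset.sum_sub_distrib]
  · simp [inner_blockDiff_of_ne horth h]

include horth horth' hnorm hw in
theorem span_blockDiff :
    Submodule.span 𝕜 (Set.range fun p : Σ b, {i : ι b // i ≠ i₀ b} =>
        blockDiff (𝕜 := 𝕜) e w i₀ p.1 p.2) =
      Submodule.span 𝕜 (Set.range fun p : Σ b, ι b => e p.1 p.2) ⊓
        (Submodule.span 𝕜 (Set.range fun b => ∑ i, e b i))ᗮ := by
  set D := Submodule.span 𝕜 (Set.range fun p : Σ b, {i : ι b // i ≠ i₀ b} =>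
    blockDiff (𝕜 := 𝕜) e w i₀ p.1 p.2)
  set V := Submodule.span 𝕜 (Set.range fun b => ∑ i, e b i)
  have hD : ∀ b i, blockDiff (𝕜 := 𝕜) e w i₀ b i ∈ D := by
    intro b i
    by_cases hi : i = i₀ b
    · simp [hi, blockDiff]
    · exact Submodule.subset_span ⟨⟨b, i, hi⟩, rfl⟩
  have hDV : D ≤ Vᗮ := by
    refine Submodule.isOrtho_iff_le.1 (Submodule.isOrtho_span.2 ?_).symm
    rintro _ ⟨b, rfl⟩ _ ⟨p, rfl⟩
    exact inner_sum_blockDiff horth horth' hnorm hw b p.1 p.2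
  refine le_antisymm (le_inf ?_ hDV) (Submodule.inf_orthogonal_le_of_le_sup ?_ hDV)
  · refine Submodule.span_le.2 ?_
    rintro _ ⟨p, rfl⟩
    exact Submodule.sub_mem _ (Submodule.smul_mem _ _ (Submodule.subset_span ⟨⟨_, _⟩, rfl⟩))
      (Submodule.smul_mem _ _ (Submodule.subset_span ⟨⟨_, _⟩, rfl⟩))
  refine Submodule.span_le.2 ?_
  rintro _ ⟨⟨b, j⟩, rfl⟩
  -- summing `smul_blockDiff_add` over the block expresses `w_{i₀}⁻¹ e_{i₀}` through `V` and `D`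
  have hsum : (0 : ℝ) < ∑ i, w b i := Finset.sum_pos (fun i _ => hw b i) ⟨i₀ b, Finset.mem_univ _⟩
  have h₀ : ((w b (i₀ b) : 𝕜))⁻¹ • e b (i₀ b) ∈ V ⊔ D := by
    have := Finset.sum_congr rfl fun i (_ : i ∈ Finset.univ) =>
      smul_blockDiff_add (𝕜 := 𝕜) (e := e) (i₀ := i₀) hw b i
    rw [Finset.sum_add_distrib, ← Finset.sum_smul, ← RCLike.ofReal_sum] at this
    rw [← inv_smul_smul₀ (RCLike.ofReal_ne_zero (K := 𝕜) |>.2 hsum.ne') (_ • e b (i₀ b)), ← this,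
      add_comm]
    exact Submodule.smul_mem _ _ (Submodule.add_mem_sup (Submodule.subset_span ⟨b, rfl⟩)
      (Submodule.sum_mem _ fun i _ => Submodule.smul_mem _ _ (hD b i)))
  show e b j ∈ V ⊔ D
  rw [← add_sub_cancel_left ((w b j : 𝕜) • blockDiff (𝕜 := 𝕜) e w i₀ b j) (e b j),
    smul_blockDiff_add hw]
  exact Submodule.sub_mem _ (Submodule.smul_mem _ _ h₀)
    (Submodule.mem_sup_right (Submodule.smul_mem _ _ (hD b j)))

end InnerProductSpace

namespace MeasureTheory

variable {α E : Type*} [MeasurableSpace α] {μ : Measure α} [NormedAddCommGroup E]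
  {p : ℝ≥0∞}

theorem indicatorConstLp_congr_set {s t : Set α} (hst : s = t) (hs : MeasurableSet s)
    (ht : MeasurableSet t) (hμs : μ s ≠ ∞) (hμt : μ t ≠ ∞) (c : E) :
    indicatorConstLp p hs hμs c = indicatorConstLp p ht hμt c := by
  subst hst; rfl

theorem indicatorConstLp_biUnion {ι : Type*} (u : Finset ι) {s : ι → Set α}
    (hs : ∀ i, MeasurableSet (s i)) (hμs : ∀ i, μ (s i) ≠ ∞)
    (hd : (u : Set ι).PairwiseDisjoint s) (c : E) :
    indicatorConstLp p (u.measurableSet_biUnion fun i _ => hs i)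
        (measure_biUnion_lt_top u.finite_toSet fun i _ => (hμs i).lt_top).ne c =
      ∑ i ∈ u, indicatorConstLp p (hs i) (hμs i) c := by
  induction u using Finset.induction_on with
  | empty =>
    rw [indicatorConstLp_congr_set (by simp) _ .empty _ (by simp), indicatorConstLp_empty,
      Finset.sum_empty]
  | insert a u ha ih =>
    have hu := u.measurableSet_biUnion fun i _ => hs i
    have hμu := (measure_biUnion_lt_top u.finite_toSet fun i _ => (hμs i).lt_top).ne
    have hdisj : Disjoint (s a) (⋃ i ∈ u, s i) :=
      Set.disjoint_iUnion₂_right.2 fun i hi =>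
        hd (Finset.mem_insert_self a u) (Finset.mem_insert_of_mem hi) (by rintro rfl; exact ha hi)
    rw [indicatorConstLp_congr_set (Finset.set_biUnion_insert a u s) _ ((hs a).union hu) _
        (measure_union_lt_top (hμs a).lt_top hμu.lt_top).ne,
      indicatorConstLp_disjoint_union (hs a) hu (hμs a) hμu hdisj, ih (hd.subset (by simp)),
      Finset.sum_insert ha]

end MeasureTheory

namespace Matrix

theorem pos_of_mulVec_eq_smul {n : Type*} [Fintype n] {B : Matrix n n ℕ} {r : ℝ} {x : n → ℝ}
    (hx : ∀ v, 0 < x v) (hBx : (B.map (Nat.cast : ℕ → ℝ)).mulVec x = r • x) {v : n}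
    (hv : ∑ b, B v b ≠ 0) : 0 < r := by
  obtain ⟨b, -, hb⟩ := Finset.exists_ne_zero_of_sum_ne_zero hv
  have hpos : 0 < ∑ b, (B v b : ℝ) * x b :=
    Finset.sum_pos' (fun b _ => mul_nonneg (Nat.cast_nonneg _) (hx b).le)
      ⟨b, Finset.mem_univ b, mul_pos (by exact_mod_cast Nat.pos_of_ne_zero hb) (hx b)⟩
  have hv := congrFun hBx v
  simp only [mulVec, dotProduct, map_apply, Pi.smul_apply, smul_eq_mul] at hv
  exact pos_of_mul_pos_left (hv ▸ hpos) (hx v).le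

end Matrix

def natSubtypeEquivFinNeZero (m : ℕ) (hm : 0 < m) :
    {i : ℕ // 1 ≤ i ∧ i < m} ≃ {j : Fin m // j ≠ ⟨0, hm⟩} where
  toFun i := ⟨⟨i, i.2.2⟩, fun h => by simp only [Fin.mk.injEq] at h; omega⟩
  invFun j := ⟨j.1, Nat.one_le_iff_ne_zero.2 fun h => j.2 (Fin.ext h), j.1.2⟩
  left_inv _ := rfl
  right_inv _ := rfl

namespace KBratteli

variable {k N : ℕ} [NeZero k] {A : Fin k → Matrix (Fin N) (Fin N) ℕ}

/-- Edges at different levels (related by `Edge.cast`) are compared through this data. -/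
def Edge.data {i : ℕ} (e : Edge k N A i) : Fin N × Fin N × ℕ := (e.rg, e.src, e.idx)

lemma Edge.data_injective {i : ℕ} : Function.Injective (Edge.data (k := k) (A := A) (i := i)) := by
  rintro ⟨r, s, ⟨a, ha⟩⟩ ⟨r', s', ⟨a', ha'⟩⟩ h
  simp only [Edge.data, Prod.mk.injEq] at h
  obtain ⟨rfl, rfl, rfl⟩ := h
  rfl

@[simp] lemma Edge.cast_rg {i j : ℕ} (h : (i : Fin k) = (j : Fin k)) (e : Edge k N A i) :
    (e.cast h).rg = e.rg := rfl

@[simp] lemma Edge.cast_src {i j : ℕ} (h : (i : Fin k) = (j : Fin k)) (e : Edge k N A i) :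
    (e.cast h).src = e.src := rfl

@[simp] lemma Edge.data_cast {i j : ℕ} (h : (i : Fin k) = (j : Fin k)) (e : Edge k N A i) :
    (e.cast h).data = e.data := rfl

lemma FinPath.edge_data_congr {ℓ : ℕ} (p : FinPath k N A ℓ) {i j : Fin ℓ} (h : i = j) :
    (p.edge i).data = (p.edge j).data := by
  subst h; rfl

lemma FinPath.ext {ℓ : ℕ} {p q : FinPath k N A ℓ} (hr : p.rg = q.rg)
    (he : ∀ i, p.edge i = q.edge i) : p = q := by
  have hv : p.vtx = q.vtx := by
    funext i
    induction i using Fin.cases with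
    | zero => exact hr
    | succ j => rw [← p.src_eq j, ← q.src_eq j, he]
  cases p; cases q
  subst hv
  simp only [FinPath.mk.injEq, true_and]
  exact funext he

lemma mem_cyl_iff {ℓ : ℕ} {lam : FinPath k N A ℓ} {x : PathSpace k N A} :
    x ∈ Cyl lam ↔ prefixPath x ℓ = lam := by
  refine ⟨fun hx => FinPath.ext hx.1 hx.2, ?_⟩
  rintro rfl
  exact mem_cyl_prefixPath x ℓ

variable {n : ℕ}

def trunc (p : FinPath k N A (n * k + k)) : FinPath k N A (n * k) where
  vtx i := p.vtx (Fin.castLE (by omega) i)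
  edge i := p.edge (Fin.castLE (by omega) i)
  rg_eq i := (p.rg_eq _).trans (congrArg p.vtx (Fin.ext rfl))
  src_eq i := (p.src_eq _).trans (congrArg p.vtx (Fin.ext rfl))

/-- The last `k` edges of a path of length `n * k + k`, moved down to levels `0, …, k - 1`. -/
def tail (p : FinPath k N A (n * k + k)) : FinPath k N A k where
  vtx j := p.vtx ⟨n * k + j, by omega⟩
  edge j := Edge.cast (natCast_mul_add n j) (p.edge ⟨n * k + j, by omega⟩)
  rg_eq j := (p.rg_eq _).trans (congrArg p.vtx (Fin.ext rfl))
  src_eq j := (p.src_eq _).trans (congrArg p.vtx (Fin.ext (by simp [add_assoc])))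

/-- The concatenation `λη` of `λ ∈ F^{nk}B` with `η ∈ F^k B`, when `r(η) = s(λ)`. -/
def cat (lam : FinPath k N A (n * k)) (η : FinPath k N A k) (h : η.rg = lam.src) :
    FinPath k N A (n * k + k) where
  vtx i := if hi : (i : ℕ) ≤ n * k then lam.vtx ⟨i, by omega⟩ else η.vtx ⟨i - n * k, by omega⟩
  edge i := if hi : (i : ℕ) < n * k then lam.edge ⟨i, hi⟩
    else Edge.cast (by rw [← natCast_mul_add n (i - n * k), Nat.add_sub_cancel' (by omega)])
      (η.edge ⟨i - n * k, by omega⟩)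
  rg_eq i := by
    by_cases hi : (i : ℕ) < n * k
    · simp [hi, hi.le, lam.rg_eq ⟨i, hi⟩]
    · obtain hi' | hi' := eq_or_lt_of_le (not_lt.1 hi)
      · simp [← hi', η.rg_eq]
        exact h
      · simp [hi, not_le.2 hi', η.rg_eq]
  src_eq i := by
    by_cases hi : (i : ℕ) < n * k
    · simp [hi, Nat.succ_le_of_lt hi, lam.src_eq ⟨i, hi⟩]
    · simp [hi, η.src_eq, show ¬ (i : ℕ) + 1 ≤ n * k by omega]
      congr 1; ext; simp; omega

lemma tail_rg (p : FinPath k N A (n * k + k)) : (tail p).rg = (trunc p).src :=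
  congrArg p.vtx (Fin.ext (by simp))

lemma cat_src (lam : FinPath k N A (n * k)) (η : FinPath k N A k) (h : η.rg = lam.src) :
    (cat lam η h).src = η.src := by
  have : 0 < k := Nat.pos_of_ne_zero (NeZero.ne k)
  simp [FinPath.src, cat, show ¬ n * k + k ≤ n * k by omega, Fin.last]

lemma trunc_cat (lam : FinPath k N A (n * k)) (η : FinPath k N A k) (h : η.rg = lam.src) :
    trunc (cat lam η h) = lam :=
  FinPath.ext (by simp [FinPath.rg, trunc, cat]) fun i => by simp [trunc, cat]

lemma tail_cat (lam : FinPath k N A (n * k)) (η : FinPath k N A k) (h : η.rg = lam.src) :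
    tail (cat lam η h) = η := by
  refine FinPath.ext (by simp [FinPath.rg, tail, cat]; exact h.symm) fun j => ?_
  apply Edge.data_injective
  simpa [tail, cat] using η.edge_data_congr (Fin.ext (by simp))

lemma FinPath.ext_trunc_tail {p q : FinPath k N A (n * k + k)} (h₁ : trunc p = trunc q)
    (h₂ : tail p = tail q) : p = q := by
  refine FinPath.ext (congrArg FinPath.rg h₁ :) fun i => Edge.data_injective ?_
  by_cases hi : (i : ℕ) < n * k
  · exact congrArg (fun r => (r.edge ⟨i, hi⟩).data) h₁
  · have hj : i = ⟨n * k + (i - n * k), by omega⟩ := Fin.ext (by simp; omega)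
    have h₂' : (p.edge ⟨n * k + (i - n * k), by omega⟩).data =
        (q.edge ⟨n * k + (i - n * k), by omega⟩).data :=
      congrArg (fun r => (r.edge ⟨i - n * k, by omega⟩).data) h₂
    exact (p.edge_data_congr hj).trans (h₂'.trans (q.edge_data_congr hj.symm))

lemma trunc_prefixPath (x : PathSpace k N A) :
    trunc (prefixPath x (n * k + k)) = prefixPath x (n * k) :=
  rfl

lemma mem_cylCat_iff {lam : FinPath k N A (n * k)} {η : FinPath k N A k} {x : PathSpace k N A} :
    x ∈ cylCat lam η ↔ x ∈ Cyl lam ∧ tail (prefixPath x (n * k + k)) = η := by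
  constructor
  · rintro ⟨⟨hx, hrg⟩, hedge⟩
    refine ⟨hx, FinPath.ext ?_ fun j => Edge.data_injective ?_⟩
    · simpa [FinPath.rg, tail, prefixPath] using hrg
    · simpa [tail, prefixPath] using congrArg Edge.data (Set.mem_iInter.1 hedge j)
  · rintro ⟨hx, rfl⟩
    exact ⟨⟨hx, by simp [FinPath.rg, tail, prefixPath]⟩,
      Set.mem_iInter.2 fun j => Edge.data_injective (by simp [tail, prefixPath])⟩

lemma cyl_eq_cylCat (p : FinPath k N A (n * k + k)) : Cyl p = cylCat (trunc p) (tail p) := by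
  ext x
  rw [mem_cylCat_iff, mem_cyl_iff, mem_cyl_iff, ← trunc_prefixPath]
  exact ⟨by rintro rfl; simp, fun h => FinPath.ext_trunc_tail h.1 h.2⟩

lemma cyl_cat (lam : FinPath k N A (n * k)) (η : FinPath k N A k) (h : η.rg = lam.src) :
    Cyl (cat lam η h) = cylCat lam η := by
  rw [cyl_eq_cylCat, trunc_cat, tail_cat]

lemma disjoint_cylCat {lam lam' : FinPath k N A (n * k)} {η η' : FinPath k N A k}
    (h : lam ≠ lam' ∨ η ≠ η') : Disjoint (cylCat lam η) (cylCat lam' η') := by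
  refine Set.disjoint_left.2 fun y hy hy' => ?_
  rw [mem_cylCat_iff, mem_cyl_iff] at hy hy'
  exact h.elim (· (hy.1.symm.trans hy'.1)) (· (hy.2.symm.trans hy'.2))

section Measure

variable {ρ : Fin k → ℝ} {x : Fin N → ℝ}

lemma Mval_of_dvd {ℓ : ℕ} (hℓ : k ∣ ℓ) (lam : FinPath k N A ℓ) :
    Mval ρ x ⟨ℓ, lam⟩ = ((∏ i, ρ i) ^ (ℓ / k))⁻¹ * x lam.src := by
  simp [Mval, Nat.mod_eq_zero_of_dvd hℓ, Finset.prod_pow]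

variable {M : Measure (PathSpace k N A)} (hρ : ∀ i, 0 < ρ i) (hx : ∀ v, 0 < x v)
  (hM : ∀ lam : FB k N A, M (Cyl lam.2) = ENNReal.ofReal (Mval ρ x lam))
include hρ hx hM

lemma measureReal_cyl {ℓ : ℕ} (hℓ : k ∣ ℓ) (lam : FinPath k N A ℓ) :
    M.real (Cyl lam) = ((∏ i, ρ i) ^ (ℓ / k))⁻¹ * x lam.src := by
  rw [measureReal_def, hM ⟨ℓ, lam⟩, Mval_of_dvd hℓ, ENNReal.toReal_ofReal]
  exact mul_nonneg (inv_nonneg.2 (pow_nonneg (Finset.prod_nonneg fun i _ => (hρ i).le) _))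
    (hx _).le

lemma measureReal_cyl_pos {ℓ : ℕ} (hℓ : k ∣ ℓ) (lam : FinPath k N A ℓ) : 0 < M.real (Cyl lam) := by
  rw [measureReal_cyl hρ hx hM hℓ]
  exact mul_pos (inv_pos.2 (pow_pos (Finset.prod_pos fun i _ => hρ i) _)) (hx _)

lemma measureReal_cylCat {lam : FinPath k N A (n * k)} {η : FinPath k N A k}
    (h : η.rg = lam.src) : M.real (cylCat lam η) = ((∏ i, ρ i) ^ n)⁻¹ * M.real (Cyl η) := by
  have hk : 0 < k := Nat.pos_of_ne_zero (NeZero.ne k)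
  rw [← cyl_cat lam η h, measureReal_cyl hρ hx hM ⟨n + 1, by ring⟩,
    measureReal_cyl hρ hx hM dvd_rfl, cat_src, Nat.div_self hk,
    show (n * k + k) / k = n + 1 by rw [← add_one_mul, Nat.mul_div_cancel _ hk]]
  ring

end Measure

section L2

variable (M : Measure (PathSpace k N A)) [IsFiniteMeasure M]

lemma chi_eq_chiC (p : FinPath k N A (n * k + k)) : chi M p = chiC M (trunc p) (tail p) :=
  indicatorConstLp_congr_set (cyl_eq_cylCat p) _ _ _ _ _

lemma chiC_mem_Vt {lam : FinPath k N A (n * k)} {η : FinPath k N A k} (h : η.rg = lam.src) :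
    chiC M lam η ∈ Vt M ((n + 1) * k) := by
  rw [add_one_mul, show chiC M lam η = chi M (cat lam η h) by rw [chi_eq_chiC, trunc_cat, tail_cat]]
  exact Submodule.subset_span ⟨_, rfl⟩

lemma inner_chiC_chiC (lam lam' : FinPath k N A (n * k)) (η η' : FinPath k N A k) :
    ⟪chiC M lam η, chiC M lam' η'⟫_ℂ = M.real (cylCat lam η ∩ cylCat lam' η') :=
  L2.inner_indicatorConstLp_one_indicatorConstLp_one _ _

lemma inner_chiC_chiC_of_ne {lam lam' : FinPath k N A (n * k)} {η η' : FinPath k N A k}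
    (h : lam ≠ lam' ∨ η ≠ η') : ⟪chiC M lam η, chiC M lam' η'⟫_ℂ = 0 := by
  rw [inner_chiC_chiC, Set.disjoint_iff_inter_eq_empty.1 (disjoint_cylCat h), measureReal_empty,
    Complex.ofReal_zero]

section Enumeration

variable {mfun : Fin N → ℕ} {μpath : ∀ v : Fin N, Fin (mfun v) → FinPath k N A k}
  (hμsurj : ∀ (v : Fin N) (η : FinPath k N A k), η.rg = v → ∃ j, μpath v j = η)
include hμsurj

omit [IsFiniteMeasure M] in
lemma cyl_eq_iUnion_cylCat (lam : FinPath k N A (n * k)) :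
    Cyl lam = ⋃ j ∈ Finset.univ, cylCat lam (μpath lam.src j) := by
  ext y
  simp only [Finset.mem_univ, Set.iUnion_true, Set.mem_iUnion]
  refine ⟨fun hy => ?_, fun ⟨_, hj⟩ => (mem_cylCat_iff.1 hj).1⟩
  obtain ⟨j, hj⟩ := hμsurj _ (tail (prefixPath y (n * k + k)))
    (by rw [tail_rg, trunc_prefixPath, mem_cyl_iff.1 hy])
  exact ⟨j, mem_cylCat_iff.2 ⟨hy, hj.symm⟩⟩

lemma chi_eq_sum_chiC (hμinj : ∀ v, Function.Injective (μpath v)) (lam : FinPath k N A (n * k)) :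
    chi M lam = ∑ j, chiC M lam (μpath lam.src j) :=
  (indicatorConstLp_congr_set (cyl_eq_iUnion_cylCat hμsurj lam) _ _ _ _ _).trans
    (indicatorConstLp_biUnion _ (fun _ => measurableSet_cylCat _ _) (fun _ => measure_ne_top M _)
      (fun _ _ _ _ hij => disjoint_cylCat (Or.inr fun h => hij (hμinj _ h))) 1)

lemma span_chiC (hμrg : ∀ v j, (μpath v j).rg = v) :
    Submodule.span ℂ (Set.range fun p : Σ lam : FinPath k N A (n * k), Fin (mfun lam.src) =>
      chiC M p.1 (μpath p.1.src p.2)) = Vt M ((n + 1) * k) := by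
  refine le_antisymm (Submodule.span_le.2 ?_) ?_
  · rintro _ ⟨p, rfl⟩
    exact chiC_mem_Vt M (hμrg _ _)
  · rw [Vt, add_one_mul, Submodule.span_le]
    rintro _ ⟨p, rfl⟩
    obtain ⟨j, hj⟩ := hμsurj _ (tail p) (tail_rg p)
    show chi M p ∈ _
    rw [chi_eq_chiC M p, ← hj]
    exact Submodule.subset_span ⟨⟨trunc p, j⟩, rfl⟩

end Enumeration

end L2

section Wavelet

variable {ρ : Fin k → ℝ} {x : Fin N → ℝ} {M : Measure (PathSpace k N A)} [IsFiniteMeasure M]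
  {mfun : Fin N → ℕ} {μpath : ∀ v : Fin N, Fin (mfun v) → FinPath k N A k}
  (hρ : ∀ i, 0 < ρ i) (hx : ∀ v, 0 < x v)
  (hM : ∀ lam : FB k N A, M (Cyl lam.2) = ENNReal.ofReal (Mval ρ x lam))

include hρ hx hM in
lemma inner_chiC_self {lam : FinPath k N A (n * k)} {η : FinPath k N A k} (h : η.rg = lam.src) :
    ⟪chiC M lam η, chiC M lam η⟫_ℂ = (((∏ i, ρ i) ^ n)⁻¹ * M.real (Cyl η) : ℝ) := by
  rw [inner_chiC_chiC, Set.inter_self, measureReal_cylCat hρ hx hM h]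

variable (M μpath) in
/-- `M([μ_{i₀}])⁻¹ χ_{[λμ_{i₀}]} - M([μ_j])⁻¹ χ_{[λμ_j]}`, where `μ_j = μpath (s λ) j` and
`i₀ v` is a distinguished index at each vertex `v`. -/
noncomputable def wavelet (i₀ : ∀ v, Fin (mfun v)) (lam : FinPath k N A (n * k))
    (j : Fin (mfun lam.src)) : Lp ℂ 2 M :=
  InnerProductSpace.blockDiff (𝕜 := ℂ) (fun lam j => chiC M lam (μpath lam.src j))
    (fun lam j => M.real (Cyl (μpath lam.src j))) (fun lam => i₀ lam.src) lam j

variable (hμrg : ∀ v j, (μpath v j).rg = v) (hμinj : ∀ v, Function.Injective (μpath v))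
  (i₀ : ∀ v, Fin (mfun v))
include hρ hx hM hμrg hμinj

theorem linearIndependent_wavelet :
    LinearIndependent ℂ fun q : Σ lam : FinPath k N A (n * k), {j // j ≠ i₀ lam.src} =>
      wavelet M μpath i₀ q.1 q.2 :=
  InnerProductSpace.linearIndependent_blockDiff
    (fun _ _ h _ _ => inner_chiC_chiC_of_ne M (.inl h))
    (fun _ _ _ h => inner_chiC_chiC_of_ne M (.inr ((hμinj _).ne h)))
    (fun _ _ => inner_chiC_self hρ hx hM (hμrg _ _))
    (fun _ _ => measureReal_cyl_pos hρ hx hM dvd_rfl _)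
    (fun _ => inv_ne_zero (pow_pos (Finset.prod_pos fun i _ => hρ i) n).ne')

theorem span_wavelet
    (hμsurj : ∀ (v : Fin N) (η : FinPath k N A k), η.rg = v → ∃ j, μpath v j = η) :
    Submodule.span ℂ (Set.range fun q : Σ lam : FinPath k N A (n * k), {j // j ≠ i₀ lam.src} =>
      wavelet M μpath i₀ q.1 q.2) = Wn M n := by
  rw [Wn, ← span_chiC M hμsurj hμrg, Vt, funext (chi_eq_sum_chiC M hμsurj hμinj)]
  exact InnerProductSpace.span_blockDiff (e := fun lam j => chiC M lam (μpath lam.src j))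
    (fun _ _ h _ _ => inner_chiC_chiC_of_ne M (.inl h))
    (fun _ _ _ h => inner_chiC_chiC_of_ne M (.inr ((hμinj _).ne h)))
    (fun _ _ => inner_chiC_self hρ hx hM (hμrg _ _))
    (fun _ _ => measureReal_cyl_pos hρ hx hM dvd_rfl _)

end Wavelet

theorem statement14_general (k N : ℕ) [NeZero k] [NeZero N]
    (A : Fin k → Matrix (Fin N) (Fin N) ℕ)
    (hrow : ∀ (i : Fin k) (a : Fin N), 2 ≤ ∑ b, A i a b)
    (ρ : Fin k → ℝ)
    (x : Fin N → ℝ) (hxpos : ∀ v, 0 < x v)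
    (hxeig : ∀ i, ((A i).map (Nat.cast : ℕ → ℝ)).mulVec x = ρ i • x)
    (M : MeasureTheory.Measure (PathSpace k N A)) [MeasureTheory.IsProbabilityMeasure M]
    (hM : ∀ lam : FB k N A, M (Cyl lam.2) = ENNReal.ofReal (Mval ρ x lam))
    (n : ℕ)
    (mfun : Fin N → ℕ) (hmpos : ∀ v, 0 < mfun v)
    (μpath : ∀ v : Fin N, Fin (mfun v) → FinPath k N A k)
    (hμrg : ∀ v j, (μpath v j).rg = v)
    (hμinj : ∀ v, Function.Injective (μpath v))
    (hμsurj : ∀ (v : Fin N) (η : FinPath k N A k), η.rg = v → ∃ j, μpath v j = η)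
    (g : (Σ lam : FinPath k N A (n * k), { i : ℕ // 1 ≤ i ∧ i < mfun lam.src }) → Lp ℂ 2 M)
    (hg : ∀ p, g p
        = (((∏ i : Fin k, ρ i) ^ ((n : ℝ) / 2) : ℝ) : ℂ) •
            ((((M (Cyl (μpath p.1.src ⟨0, hmpos p.1.src⟩))).toReal : ℂ))⁻¹
                • chiC M p.1 (μpath p.1.src ⟨0, hmpos p.1.src⟩)
              - (((M (Cyl (μpath p.1.src ⟨p.2.1, p.2.2.2⟩))).toReal : ℂ))⁻¹
                • chiC M p.1 (μpath p.1.src ⟨p.2.1, p.2.2.2⟩))) :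
    LinearIndependent ℂ g ∧ Submodule.span ℂ (Set.range g) = Wn M n := by
  have hρ : ∀ i, 0 < ρ i := fun i =>
    Matrix.pos_of_mulVec_eq_smul hxpos (hxeig i) (v := 0) (by have := hrow i 0; omega)
  set c : ℂ := (((∏ i : Fin k, ρ i) ^ ((n : ℝ) / 2) : ℝ) : ℂ)
  have hc : c ≠ 0 := Complex.ofReal_ne_zero.2
    (Real.rpow_pos_of_pos (Finset.prod_pos fun i _ => hρ i) _).ne'
  have hg' : (fun q => c • wavelet M μpath (fun v => ⟨0, hmpos v⟩) q.1 q.2) ∘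
      Equiv.sigmaCongrRight (fun lam : FinPath k N A (n * k) =>
        natSubtypeEquivFinNeZero _ (hmpos lam.src)) = g :=
    funext fun p => (hg p).symm
  refine ⟨(linearIndependent_equiv' _ hg').2 ?_, ?_⟩
  · exact (linearIndependent_wavelet hρ hxpos hM hμrg hμinj fun v => ⟨0, hmpos v⟩).units_smul
      fun _ => Units.mk0 c hc
  · rw [← hg', Function.Surjective.range_comp (Equiv.surjective _), Set.range_smul,
      Submodule.span_smul_eq_of_isUnit _ _ hc.isUnit]
    exact span_wavelet hρ hxpos hM hμrg hμinj (fun v => ⟨0, hmpos v⟩) hμsurj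

/-- For any enumeration `μ^v_0, …, μ^v_{m_v−1}` of the length-`k`
paths with range `v`, the family
`ρ^{n/2} (M([μ^{s(λ)}_0])⁻¹ χ_{[λ μ^{s(λ)}_0]} − M([μ^{s(λ)}_i])⁻¹ χ_{[λ μ^{s(λ)}_i]})`,
over `λ ∈ F^{nk}B` and `1 ≤ i ≤ m_{s(λ)} − 1`, is a vector-space basis of `𝒲_n`. -/
theorem statement14 (k N : ℕ) [NeZero k] [NeZero N]
    (A : Fin k → Matrix (Fin N) (Fin N) ℕ)
    (hcomm : ∀ i j, A i * A j = A j * A i)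
    (hirr : IrreducibleFamily A)
    (hrow : ∀ (i : Fin k) (a : Fin N), 2 ≤ ∑ b, A i a b)
    (hAirr : MatIrreducible ((List.ofFn A).prod))
    (ρ : Fin k → ℝ) (hρ : ∀ i, ρ i = specRad (A i))
    (x : Fin N → ℝ) (hxpos : ∀ v, 0 < x v) (hxsum : ∑ v, x v = 1)
    (hxeig : ∀ i, ((A i).map (Nat.cast : ℕ → ℝ)).mulVec x = ρ i • x)
    (M : MeasureTheory.Measure (PathSpace k N A)) [MeasureTheory.IsProbabilityMeasure M]
    (hM : ∀ lam : FB k N A, M (Cyl lam.2) = ENNReal.ofReal (Mval ρ x lam))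
    (n : ℕ)
    (mfun : Fin N → ℕ) (hmpos : ∀ v, 0 < mfun v)
    (μpath : ∀ v : Fin N, Fin (mfun v) → FinPath k N A k)
    (hμrg : ∀ v j, (μpath v j).rg = v)
    (hμinj : ∀ v, Function.Injective (μpath v))
    (hμsurj : ∀ (v : Fin N) (η : FinPath k N A k), η.rg = v → ∃ j, μpath v j = η)
    (g : (Σ lam : FinPath k N A (n * k), { i : ℕ // 1 ≤ i ∧ i < mfun lam.src }) → Lp ℂ 2 M)
    (hg : ∀ p, g p
        = (((∏ i : Fin k, ρ i) ^ ((n : ℝ) / 2) : ℝ) : ℂ) •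
            ((((M (Cyl (μpath p.1.src ⟨0, hmpos p.1.src⟩))).toReal : ℂ))⁻¹
                • chiC M p.1 (μpath p.1.src ⟨0, hmpos p.1.src⟩)
              - (((M (Cyl (μpath p.1.src ⟨p.2.1, p.2.2.2⟩))).toReal : ℂ))⁻¹
                • chiC M p.1 (μpath p.1.src ⟨p.2.1, p.2.2.2⟩))) :
    LinearIndependent ℂ g ∧ Submodule.span ℂ (Set.range g) = Wn M n :=
  statement14_general k N A hrow ρ x hxpos hxeig M hM n mfun hmpos μpath hμrg hμinj hμsurj g hg

end KBratteli
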